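/- Let R = (rᵢⱼ) be a real 3×3 matrix with RᵀR = I and det R = 1, let c ∈ ℝ³, and set F := −[c]×·Rᵀ. Suppose the top-left 2×2 block of F is a scalar multiple of a rotation matrix, i.e., F₁₁ = F₂₂ and F₁₂ = −F₂₁, and suppose r₃₃ ≠ 1 and r₃₃ ≠ −1. Then c₁ = r₃₁c₃/(1 + r₃₃) and c₂ = r₃₂c₃/(1 + r₃₃). -/
import Mathlib


open Matrix

/-- The skew-symmetric cross-product matrix [t]× for t ∈ ℝ³. -/
def crossMat (t : Fin 3 → ℝ) : Matrix (Fin 3) (Fin 3) ℝ :=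
  !![0, -t 2, t 1; t 2, 0, -t 0; -t 1, t 0, 0]

/-- for R ∈ SO(3), c ∈ ℝ³ and F = −[c]×Rᵀ, if the top-left 2×2 block of F
is a scalar multiple of a rotation matrix (F₁₁ = F₂₂ and F₁₂ = −F₂₁) and r₃₃ ≠ ±1, then
c₁ = r₃₁c₃/(1 + r₃₃) and c₂ = r₃₂c₃/(1 + r₃₃). -/
theorem center_formula_of_scaled_rotation_block (R : Matrix (Fin 3) (Fin 3) ℝ)
    (hR : Rᵀ * R = 1) (hdet : R.det = 1) (c : Fin 3 → ℝ)
    (h33 : R 2 2 ≠ 1) (h33' : R 2 2 ≠ -1)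
    (h11 : (-(crossMat c) * Rᵀ) 0 0 = (-(crossMat c) * Rᵀ) 1 1)
    (h12 : (-(crossMat c) * Rᵀ) 0 1 = -((-(crossMat c) * Rᵀ) 1 0)) :
    c 0 = R 2 0 * c 2 / (1 + R 2 2) ∧ c 1 = R 2 1 * c 2 / (1 + R 2 2) := by
  have hRR : R * Rᵀ = 1 := mul_eq_one_comm.mp hR
  have hadj : R.adjugate = Rᵀ := by
    have h1 : R.adjugate * R = 1 := by rw [Matrix.adjugate_mul, hdet, one_smul]
    calc R.adjugate = R.adjugate * (R * Rᵀ) := by rw [hRR, mul_one]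
      _ = (R.adjugate * R) * Rᵀ := by rw [mul_assoc]
      _ = Rᵀ := by rw [h1, one_mul]
  have cof20 : R 2 0 = R 0 1 * R 1 2 - R 0 2 * R 1 1 := by
    have := congrFun (congrFun hadj 0) 2
    rw [Matrix.adjugate_fin_three] at this
    simpa [Matrix.transpose_apply] using this.symm
  have cof21 : R 2 1 = -(R 0 0 * R 1 2) + R 0 2 * R 1 0 := by
    have := congrFun (congrFun hadj 1) 2
    rw [Matrix.adjugate_fin_three] at this
    simpa [Matrix.transpose_apply] using this.symm
  have o1 : R 0 2 ^ 2 + R 1 2 ^ 2 + R 2 2 ^ 2 = 1 := by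
    have := congrFun (congrFun hR 2) 2
    simp [Matrix.mul_apply, Fin.sum_univ_three, Matrix.one_apply] at this
    nlinarith [this]
  have o3 : R 0 0 * R 0 2 + R 1 0 * R 1 2 + R 2 0 * R 2 2 = 0 := by
    have := congrFun (congrFun hR 0) 2
    simpa [Matrix.mul_apply, Fin.sum_univ_three, Matrix.one_apply] using this
  have o3' : R 0 1 * R 0 2 + R 1 1 * R 1 2 + R 2 1 * R 2 2 = 0 := by
    have := congrFun (congrFun hR 1) 2
    simpa [Matrix.mul_apply, Fin.sum_univ_three, Matrix.one_apply] using this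
  have e1 : c 2 * R 0 1 - c 1 * R 0 2 = -(c 2 * R 1 0) + c 0 * R 1 2 := by
    have := h11
    simp [crossMat, Matrix.mul_apply, Fin.sum_univ_three, Matrix.transpose_apply] at this
    linarith
  have e2 : c 2 * R 1 1 - c 1 * R 1 2 = c 2 * R 0 0 - c 0 * R 0 2 := by
    have := h12
    simp [crossMat, Matrix.mul_apply, Fin.sum_univ_three, Matrix.transpose_apply] at this
    linarith
  have hne : 1 + R 2 2 ≠ 0 := fun h => h33' (by linarith)
  have hne2 : 1 - R 2 2 ≠ 0 := fun h => h33 (by linarith)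
  constructor
  · rw [eq_div_iff hne]
    have key : (1 - R 2 2) * (1 + R 2 2) * (c 0 * (1 + R 2 2) - R 2 0 * c 2) = 0 := by
      linear_combination (-((1 + R 2 2) * R 1 2)) * e1 + ((1 + R 2 2) * R 0 2) * e2 -
        (c 0 * (1 + R 2 2)) * o1 + ((1 + R 2 2) * c 2) * o3 -
        ((1 + R 2 2) * c 2) * cof20
    have := mul_eq_zero.mp key
    rcases this with h | h
    · exact absurd (mul_eq_zero.mp h) (by push_neg; exact ⟨hne2, hne⟩)
    · linarith
  · rw [eq_div_iff hne]
    have key : (1 - R 2 2) * (1 + R 2 2) * (c 1 * (1 + R 2 2) - R 2 1 * c 2) = 0 := by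
      linear_combination (-((1 + R 2 2) * R 0 2)) * e1 - ((1 + R 2 2) * R 1 2) * e2 -
        (c 1 * (1 + R 2 2)) * o1 + ((1 + R 2 2) * c 2) * o3' -
        ((1 + R 2 2) * c 2) * cof21
    have := mul_eq_zero.mp key
    rcases this with h | h
    · exact absurd (mul_eq_zero.mp h) (by push_neg; exact ⟨hne2, hne⟩)
    · linarith
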